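/- arXiv:2004.12685 — 6 statements merged into one kernel-verified Lean document; each statement's English description precedes it below -/
import Mathlib

section
/- In the interpretability logic IL, the axiom scheme L3 (□A→□□A) is derivable from the remaining axioms and rules, i.e., from propositional logic, necessitation, L2, L4, J1–J5 (using specifically J4 and J5). -/
inductive ILFormula : Type
  | bot : ILFormula
  | var : Nat → ILFormula
  | imp : ILFormula → ILFormula → ILFormula
  | box : ILFormula → ILFormula
  | rhd : ILFormula → ILFormula → ILFormula

namespace ILFormula

def neg (A : ILFormula) : ILFormula := imp A bot
def dia (A : ILFormula) : ILFormula := neg (box (neg A))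
def or (A B : ILFormula) : ILFormula := imp (neg A) B
def and (A B : ILFormula) : ILFormula := neg (imp A (neg B))

end ILFormula

/-- A propositional valuation: respects falsum and implication. -/
def IsPropValuation (v : ILFormula → Prop) : Prop :=
  ¬ v ILFormula.bot ∧ ∀ A B, v (ILFormula.imp A B) ↔ (v A → v B)

/-- A propositional tautology: true under every propositional valuation
(box- and rhd-formulas are treated as atoms). -/
def IsTaut (A : ILFormula) : Prop := ∀ v, IsPropValuation v → v A

/-- Provability in IL extended with an extra axiom set `Ax`. -/
inductive ILProvW (Ax : ILFormula → Prop) : ILFormula → Prop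
  | ax {A : ILFormula} : Ax A → ILProvW Ax A
  | taut {A : ILFormula} : IsTaut A → ILProvW Ax A
  | mp {A B : ILFormula} : ILProvW Ax (A.imp B) → ILProvW Ax A → ILProvW Ax B
  | nec {A : ILFormula} : ILProvW Ax A → ILProvW Ax A.box
  | L2 (A B : ILFormula) : ILProvW Ax (((A.imp B).box).imp ((A.box).imp (B.box)))
  | L3 (A : ILFormula) : ILProvW Ax ((A.box).imp (A.box.box))
  | L4 (A : ILFormula) : ILProvW Ax ((((A.box).imp A).box).imp A.box)
  | J1 (A B : ILFormula) : ILProvW Ax (((A.imp B).box).imp (A.rhd B))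
  | J2 (A B C : ILFormula) : ILProvW Ax (((A.rhd B).and (B.rhd C)).imp (A.rhd C))
  | J3 (A B C : ILFormula) : ILProvW Ax (((A.rhd C).and (B.rhd C)).imp ((A.or B).rhd C))
  | J4 (A B : ILFormula) : ILProvW Ax ((A.rhd B).imp ((A.dia).imp (B.dia)))
  | J5 (A : ILFormula) : ILProvW Ax ((A.dia).rhd A)

/-- Provability in the basic interpretability logic IL. -/
def ILProv : ILFormula → Prop := ILProvW (fun _ => False)

/-- Provability in IL', i.e. IL without the axiom scheme L3. -/
inductive ILProv' : ILFormula → Prop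
  | taut {A : ILFormula} : IsTaut A → ILProv' A
  | mp {A B : ILFormula} : ILProv' (A.imp B) → ILProv' A → ILProv' B
  | nec {A : ILFormula} : ILProv' A → ILProv' A.box
  | L2 (A B : ILFormula) : ILProv' (((A.imp B).box).imp ((A.box).imp (B.box)))
  | L4 (A : ILFormula) : ILProv' ((((A.box).imp A).box).imp A.box)
  | J1 (A B : ILFormula) : ILProv' (((A.imp B).box).imp (A.rhd B))
  | J2 (A B C : ILFormula) : ILProv' (((A.rhd B).and (B.rhd C)).imp (A.rhd C))
  | J3 (A B C : ILFormula) : ILProv' (((A.rhd C).and (B.rhd C)).imp ((A.or B).rhd C))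
  | J4 (A B : ILFormula) : ILProv' ((A.rhd B).imp ((A.dia).imp (B.dia)))
  | J5 (A : ILFormula) : ILProv' ((A.dia).rhd A)

section Aux

open ILFormula

lemma aux_taut {A : ILFormula}
    (h : ∀ v : ILFormula → Prop, (¬ v ILFormula.bot) →
      (∀ A B, v (ILFormula.imp A B) ↔ (v A → v B)) → v A) : IsTaut A := by
  intro v hv; exact h v hv.1 hv.2

lemma aux_imp_trans {A B C : ILFormula} (h1 : ILProv' (A.imp B))
    (h2 : ILProv' (B.imp C)) : ILProv' (A.imp C) := by
  have t : IsTaut ((A.imp B).imp ((B.imp C).imp (A.imp C))) := by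
    apply aux_taut; intro v _ hi; simp only [hi]; tauto
  exact ILProv'.mp (ILProv'.mp (ILProv'.taut t) h1) h2

lemma aux_box_mono {A B : ILFormula} (h : ILProv' (A.imp B)) :
    ILProv' ((A.box).imp (B.box)) :=
  ILProv'.mp (ILProv'.L2 A B) (ILProv'.nec h)

theorem stmt1 (A : ILFormula) :
    ILProv' ((A.box).imp (A.box.box)) := by
  set C : ILFormula := A.and A.box with hC
  -- □C → □A
  have h1 : ILProv' ((C.box).imp (A.box)) := by
    apply aux_box_mono
    apply ILProv'.taut; apply aux_taut
    intro v hb hi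
    simp only [hC, ILFormula.and, ILFormula.neg, hi]; tauto
  -- □C → □□A
  have h2 : ILProv' ((C.box).imp (A.box.box)) := by
    apply aux_box_mono
    apply ILProv'.taut; apply aux_taut
    intro v hb hi
    simp only [hC, ILFormula.and, ILFormula.neg, hi]; tauto
  -- A → (□C → C)
  have h3 : ILProv' (A.imp ((C.box).imp C)) := by
    have t : IsTaut (((C.box).imp (A.box)).imp (A.imp ((C.box).imp C))) := by
      apply aux_taut; intro v hb hi
      simp only [hC, ILFormula.and, ILFormula.neg, hi]; tauto
    exact ILProv'.mp (ILProv'.taut t) h1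
  -- □A → □(□C → C)
  have h4 : ILProv' ((A.box).imp (((C.box).imp C).box)) := aux_box_mono h3
  -- □A → □C
  have h5 : ILProv' ((A.box).imp (C.box)) := aux_imp_trans h4 (ILProv'.L4 C)
  exact aux_imp_trans h5 h2

end Aux
end

section
/- A Veltman frame F validates Montagna's principle M ((A▷B) → ((A∧□C)▷(B∧□C))) if and only if F satisfies the frame condition: for all x,y,z,u, if y S_x z and z R u then y R u. -/
/-- No infinite ascending chain. -/
def ConverselyWellFounded {α : Type} (R : α → α → Prop) : Prop :=
  ¬ ∃ f : Nat → α, ∀ n, R (f n) (f (n + 1))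

structure VeltmanFrame where
  W : Type
  nonempty : Nonempty W
  R : W → W → Prop
  S : W → W → W → Prop
  R_trans : ∀ {x y z}, R x y → R y z → R x z
  R_cwf : ConverselyWellFounded R
  S_dom : ∀ {w x y}, S w x y → R w x ∧ R w y
  R_sub_S : ∀ {w x y}, R w x → R x y → S w x y
  S_refl : ∀ {w x}, R w x → S w x x
  S_trans : ∀ {w x y z}, S w x y → S w y z → S w x z

def forces (F : VeltmanFrame) (val : F.W → Nat → Prop) : F.W → ILFormula → Prop
  | _, ILFormula.bot => False
  | w, ILFormula.var n => val w n
  | w, ILFormula.imp A B => forces F val w A → forces F val w B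
  | w, ILFormula.box A => ∀ v, F.R w v → forces F val v A
  | w, ILFormula.rhd A B =>
      ∀ u, F.R w u → forces F val u A → ∃ v, F.S w u v ∧ forces F val v B

/-- A frame validates a formula if it is forced at every world under every
forcing relation. -/
def ValidOn (F : VeltmanFrame) (A : ILFormula) : Prop :=
  ∀ val w, forces F val w A


lemma forces_and (F : VeltmanFrame) (val : F.W → Nat → Prop) (w : F.W) (A B : ILFormula) :
    forces F val w (A.and B) ↔ (forces F val w A ∧ forces F val w B) := by
  simp only [ILFormula.and, ILFormula.neg, forces]
  tauto

theorem stmt6 (F : VeltmanFrame) :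
    (∀ A B C : ILFormula,
      ValidOn F ((A.rhd B).imp ((A.and C.box).rhd (B.and C.box)))) ↔
    (∀ x y z u : F.W, F.S x y z → F.R z u → F.R y u) := by
  constructor
  · intro h x y z u hS hR
    rcases F.S_dom hS with ⟨hxy, hxz⟩
    by_contra hyu
    set val : F.W → Nat → Prop := fun w n =>
      (n = 0 ∧ w = y) ∨ (n = 1 ∧ w = z) ∨ (n = 2 ∧ F.R y w) with hval
    have hM := h (ILFormula.var 0) (ILFormula.var 1) (ILFormula.var 2) val x
    simp only [forces] at hM
    have hAB : ∀ t, F.R x t → val t 0 → ∃ v, F.S x t v ∧ val v 1 := by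
      intro t hxt ht
      rcases ht with ⟨_, rfl⟩ | ⟨h1, _⟩ | ⟨h2, _⟩
      · exact ⟨z, hS, Or.inr (Or.inl ⟨rfl, rfl⟩)⟩
      · exact absurd h1 (by norm_num)
      · exact absurd h2 (by norm_num)
    have := hM hAB y hxy (fun k =>
      k (Or.inl ⟨rfl, rfl⟩) (fun v hyv => Or.inr (Or.inr ⟨rfl, hyv⟩)))
    rcases this with ⟨v, hSv, hv⟩
    have hv' : val v 1 ∧ ∀ w, F.R v w → val w 2 := by
      by_contra hc
      exact hv (fun h1 h2 => hc ⟨h1, h2⟩)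
    rcases hv' with ⟨hv1, hv2⟩
    rcases hv1 with ⟨h0, _⟩ | ⟨_, rfl⟩ | ⟨h2, _⟩
    · exact absurd h0 (by norm_num)
    · rcases hv2 u hR with ⟨h0, _⟩ | ⟨h1, _⟩ | ⟨_, hru⟩
      · exact absurd h0 (by norm_num)
      · exact absurd h1 (by norm_num)
      · exact hyu hru
    · exact absurd h2 (by norm_num)
  · intro h A B C val w
    simp only [forces]
    intro hAB t hwt ht
    have ht' : forces F val t A ∧ ∀ v, F.R t v → forces F val v C := by
      by_contra hc
      exact ht (fun h1 h2 => hc ⟨h1, h2⟩)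
    rcases ht' with ⟨hA, hC⟩
    rcases hAB t hwt hA with ⟨v, hSv, hB⟩
    exact ⟨v, hSv, fun k => k hB (fun u hvu => hC u (h w t v u hSv hvu))⟩
end

section
/- A Veltman frame F validates the persistence principle P ((A▷B) → □(A▷B)) if and only if F satisfies the frame condition: for all x,y,z,u, if xRy, yRz and z S_x u, then z S_y u. -/
theorem stmt7 (F : VeltmanFrame) :
    (∀ A B : ILFormula, ValidOn F ((A.rhd B).imp ((A.rhd B).box))) ↔
    (∀ x y z u : F.W, F.R x y → F.R y z → F.S x z u → F.S y z u) := by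
  constructor
  · intro h x y z u hxy hyz hSx
    have hv := h (ILFormula.var 0) (ILFormula.var 1)
      (fun w n => (n = 0 ∧ w = z) ∨ (n = 1 ∧ w = u)) x
    simp only [forces] at hv
    have := hv (by
      rintro t _ (⟨_, rfl⟩ | ⟨h1, _⟩)
      · exact ⟨u, hSx, Or.inr ⟨by norm_num, rfl⟩⟩
      · exact absurd h1 (by norm_num)) y hxy z hyz (Or.inl ⟨by norm_num, rfl⟩)
    rcases this with ⟨v, hS, (⟨h1, _⟩ | ⟨_, rfl⟩)⟩
    · exact absurd h1 (by norm_num)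
    · exact hS
  · intro h A B val w
    simp only [forces]
    intro hw y hwy t hyt ht
    obtain ⟨v, hS, hB⟩ := hw t (F.R_trans hwy hyt) ht
    exact ⟨v, h w y t v hwy hyt hS, hB⟩
end

section
/- A Veltman frame F validates the principle W ((A▷B) → (A▷(B∧□¬A))) if and only if for every world x the composite relation R;S_x (where u (R;S_x) v iff ∃w, uRw and w S_x v) is conversely well-founded. -/
theorem stmt8 (F : VeltmanFrame) :
    (∀ A B : ILFormula,
      ValidOn F ((A.rhd B).imp (A.rhd (B.and ((A.neg).box))))) ↔
    (∀ x : F.W,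
      ConverselyWellFounded (fun u v : F.W => ∃ w, F.R u w ∧ F.S x w v)) := by

  constructor
  · intro h x hchain
    obtain ⟨f, hf⟩ := hchain
    choose m hm1 hm2 using hf
    classical
    set val : F.W → Nat → Prop :=
      fun v i => if i = 0 then ∃ k, v = m k else ∃ k, v = f (k+1) with hval
    have hW := h (ILFormula.var 0) (ILFormula.var 1) val x
    have hprem : forces F val x ((ILFormula.var 0).rhd (ILFormula.var 1)) := by
      intro u hxu hu
      simp only [forces, hval, if_pos rfl] at hu
      obtain ⟨k, rfl⟩ := hu
      refine ⟨f (k+1), hm2 k, ?_⟩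
      simp only [forces, hval]
      exact ⟨k, rfl⟩
    have hconc := hW hprem (m 0) (F.S_dom (hm2 0)).1 (by
      simp only [forces, hval, if_pos rfl]; exact ⟨0, rfl⟩)
    obtain ⟨v, hSv, hv⟩ := hconc
    simp only [ILFormula.and, ILFormula.neg, forces] at hv
    have hP : val v 1 := by
      by_contra hP
      exact hv (fun p _ => hP p)
    simp only [hval] at hP
    norm_num at hP
    obtain ⟨k, rfl⟩ := hP
    refine hv (fun _ q => q (m (k+1)) (hm1 (k+1)) ?_)
    show val (m (k+1)) 0
    simp only [hval, if_pos rfl]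
    exact ⟨k+1, rfl⟩
  · intro h A B val w hAB u hwu huA
    classical
    by_contra hno
    push_neg at hno
    set Bad : F.W → Prop := fun v => F.S w u v ∧ forces F val v B with hBad
    have step : ∀ v : {v // Bad v}, ∃ v' : {v // Bad v},
        ∃ mm, F.R v.1 mm ∧ F.S w mm v'.1 := by
      rintro ⟨v, hSv, hBv⟩
      have hnv := hno v hSv
      have hnbox : ¬ forces F val v ((A.neg).box) := by
        intro hbox
        apply hnv
        simp only [ILFormula.and, ILFormula.neg, forces]
        intro hcon
        exact hcon hBv (fun v' hv' => hbox v' hv')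
      simp only [forces, ILFormula.neg] at hnbox
      push_neg at hnbox
      obtain ⟨mm, hvm, hmA', -⟩ := hnbox
      have hwv : F.R w v := (F.S_dom hSv).2
      have hwm : F.R w mm := F.R_trans hwv hvm
      obtain ⟨v', hSmv', hBv'⟩ := hAB mm hwm hmA'
      refine ⟨⟨v', ?_, hBv'⟩, mm, hvm, hSmv'⟩
      exact F.S_trans hSv (F.S_trans (F.R_sub_S hwv hvm) hSmv')
    obtain ⟨v0, hS0, hB0⟩ := hAB u hwu huA
    choose g hg using step
    let seq : Nat → {v // Bad v} := fun n => Nat.rec ⟨v0, hS0, hB0⟩ (fun _ ih => g ih) n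
    exact h w ⟨fun n => (seq n).1, fun n => hg (seq n)⟩
end

section
/- A Veltman frame F validates the principle M₀ ((A▷B) → ((◇A∧□C)▷(B∧□C))) if and only if F satisfies the frame condition: for all x,y,z,u,v, if xRy, yRz, z S_x u and uRv, then yRv. -/
theorem stmt9 (F : VeltmanFrame) :
    (∀ A B C : ILFormula,
      ValidOn F ((A.rhd B).imp (((A.dia).and C.box).rhd (B.and C.box)))) ↔
    (∀ x y z u v : F.W,
      F.R x y → F.R y z → F.S x z u → F.R u v → F.R y v) := by
  constructor
  · intro hval x y z u v hxy hyz hSzu huv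
    by_contra hn
    have h := hval (.var 0) (.var 2) (.var 1)
      (fun w n => if n = 0 then w = z else if n = 2 then w = u else F.R y w) x
    simp only [forces, ILFormula.and, ILFormula.dia, ILFormula.neg,
      if_pos, if_neg, reduceIte] at h
    have h2 := h (fun u' hxu' hA => ⟨u, by simpa using hA ▸ hSzu, by simp⟩)
    obtain ⟨t, hS, hBC⟩ := h2 y hxy (fun g => g
      (fun hb => hb z hyz (by simp)) (fun w hw => by simpa using hw))
    refine hBC (fun hB hboxC => hn ?_)
    have hB' : t = u := by simpa using hB
    have := hboxC v (by rw [hB']; exact huv)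
    simpa using this
  · intro hfc A B C val w
    simp only [forces, ILFormula.and, ILFormula.dia, ILFormula.neg]
    intro hAB u hwu hand
    have hdia : ¬ ∀ w', F.R u w' → forces F val w' A → False := by
      intro h; exact hand (fun p q => p h)
    have hbox : ∀ w', F.R u w' → forces F val w' C := by
      by_contra h
      push_neg at h
      exact hand (fun p q => h.elim (fun w' hw' => hw'.2 (q w' hw'.1)))
    have hz : ∃ z, F.R u z ∧ forces F val z A := by
      by_contra h
      push_neg at h
      exact hdia (fun w' hr ha => h w' hr ha)
    obtain ⟨z, huz, hzA⟩ := hz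
    obtain ⟨t, hSzt, hB⟩ := hAB z (F.R_trans hwu huz) hzA
    refine ⟨t, F.S_trans (F.R_sub_S hwu huz) hSzt, fun g => g hB ?_⟩
    intro v' hv'
    exact hbox v' (hfc w u z t v' hwu huz hSzt hv')
end

section
/- On every ILM-frame and on every ILP-frame, for each world x the composed relation R;S_x is conversely well-founded (i.e., both the ILM and the ILP frame conditions imply the ILW frame condition). -/
def ILMFrameCond (F : VeltmanFrame) : Prop :=
  ∀ x y z u : F.W, F.S x y z → F.R z u → F.R y u

def ILPFrameCond (F : VeltmanFrame) : Prop :=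
  ∀ x y z u : F.W, F.R x y → F.R y z → F.S x z u → F.S y z u

def ILWFrameCond (F : VeltmanFrame) : Prop :=
  ∀ x : F.W, ConverselyWellFounded (fun u v : F.W => ∃ w, F.R u w ∧ F.S x w v)

theorem stmt13 :
    (∀ F : VeltmanFrame, ILMFrameCond F → ILWFrameCond F) ∧
    (∀ F : VeltmanFrame, ILPFrameCond F → ILWFrameCond F) := by
  constructor
  · intro F hM x ⟨f, hf⟩
    have hw : ∀ n, ∃ w, F.R (f n) w ∧ F.S x w (f (n+1)) := hf
    let g : Nat → F.W := fun n => (hw n).choose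
    exact F.R_cwf ⟨g, fun n =>
      hM x (g n) (f (n+1)) (g (n+1)) (hw n).choose_spec.2 (hw (n+1)).choose_spec.1⟩
  · intro F hP x ⟨f, hf⟩
    have key : ∀ n, F.R (f (n+1)) (f (n+2)) := by
      intro n
      obtain ⟨w, hRw, hSw⟩ := hf (n+1)
      obtain ⟨w0, _, hS0⟩ := hf n
      have hxf : F.R x (f (n+1)) := (F.S_dom hS0).2
      exact (F.S_dom (hP x (f (n+1)) w (f (n+2)) hxf hRw hSw)).2
    exact F.R_cwf ⟨fun n => f (n+1), key⟩
end
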